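/- arXiv:1410.4391 — 3 statements merged into one kernel-verified Lean document; each statement's English description precedes it below -/
import Mathlib

section
/- Let n ≥ 1 and d ≥ 1 be integers, let R_1, …, R_d : Fin n → ℝ be rankings, and set P(i) = ∏_{j=1}^d R_j(i). Let v : Fin n → ℝ be a fixed list of rank values and suppose R = v ∘ τ for some permutation τ of Fin n such that R and P monovary (i.e., P(i) < P(k) implies R(i) ≤ R(k)). Define, for any G : Fin n → ℝ, the empirical multivariate Spearman correlation ρ_n(G; R_1,…,R_d) = h(d+1)·[(2^{d+1}/n)·∑_{i} G(i)·∏_{j=1}^d R_j(i) − 1], where h(d+1) = (d+2)/(2^{d+1} − (d+2)) > 0. Then for every permutation π of Fin n, ρ_n(v ∘ π; R_1,…,R_d) ≤ ρ_n(R; R_1,…,R_d); that is, the ranking ordered like the product (geometric mean) of the R_j maximises multivariate Spearman's ρ among all rankings with the given value set. -/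
/-! Since the normalising factor `h(d+1)` and the weight `2^{d+1}/n` are nonnegative, `ρ_n(G)` is
a monotone function of `∑ i, G i * P i`. Every candidate `v ∘ π` is a rearrangement
`(v ∘ τ) ∘ (τ⁻¹ * π)` of the ranking `v ∘ τ`, which monovaries with `P`, so the rearrangement
inequality bounds that sum by its value at `v ∘ τ`. -/

theorem natCast_add_two_le_two_pow_succ (d : ℕ) : (d : ℝ) + 2 ≤ 2 ^ (d + 1) := by
  have := one_add_mul_le_pow (a := (1 : ℝ)) (by norm_num) (d + 1)
  norm_num at this
  linarith

theorem Monovary.sum_comp_perm_mul_le_sum_comp_perm_mul {ι α : Type*} [Fintype ι]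
    [CommRing α] [LinearOrder α] [IsStrictOrderedRing α] {v g : ι → α} {τ : Equiv.Perm ι}
    (h : Monovary (v ∘ τ) g) (π : Equiv.Perm ι) :
    ∑ i, v (π i) * g i ≤ ∑ i, v (τ i) * g i := by
  simpa using h.sum_comp_perm_mul_le_sum_mul (σ := τ⁻¹ * π)

theorem stmt_7_general (n d : ℕ)
    (R : Fin d → Fin n → ℝ) (P : Fin n → ℝ) (hP : P = fun i => ∏ j, R j i)
    (v : Fin n → ℝ) (τ : Equiv.Perm (Fin n))
    (Rag : Fin n → ℝ) (hRag : Rag = v ∘ τ)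
    (hmono : ∀ i k, P i < P k → Rag i ≤ Rag k)
    (ρ : (Fin n → ℝ) → ℝ)
    (hρ : ρ = fun G => ((d : ℝ) + 2) / ((2 : ℝ) ^ (d + 1) - ((d : ℝ) + 2)) *
        ((2 : ℝ) ^ (d + 1) / (n : ℝ) * (∑ i, G i * ∏ j, R j i) - 1)) :
    ∀ π : Equiv.Perm (Fin n), ρ (v ∘ π) ≤ ρ Rag := by
  intro π
  subst hP hRag hρ
  have hsum : ∑ i, v (π i) * ∏ j, R j i ≤ ∑ i, v (τ i) * ∏ j, R j i :=
    Monovary.sum_comp_perm_mul_le_sum_comp_perm_mul (fun i k h => hmono i k h) π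
  dsimp only [Function.comp_apply]
  gcongr ?_ * (_ * ?_ - 1)
  exact div_nonneg (by positivity) (sub_nonneg.2 (natCast_add_two_le_two_pow_succ d))

/-- The ranking ordered like the product (geometric mean) of the expert rankings
maximises the empirical multivariate Spearman correlation
`ρ_n(G) = h(d+1)·[(2^{d+1}/n)·∑_i G(i)·∏_j R_j(i) − 1]` among all rankings with the
given value set `v`. -/
theorem stmt_7 (n d : ℕ) (hn : 1 ≤ n) (hd : 1 ≤ d)
    (R : Fin d → Fin n → ℝ) (P : Fin n → ℝ) (hP : P = fun i => ∏ j, R j i)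
    (v : Fin n → ℝ) (τ : Equiv.Perm (Fin n))
    (Rag : Fin n → ℝ) (hRag : Rag = v ∘ τ)
    (hmono : ∀ i k, P i < P k → Rag i ≤ Rag k)
    (ρ : (Fin n → ℝ) → ℝ)
    (hρ : ρ = fun G => ((d : ℝ) + 2) / ((2 : ℝ) ^ (d + 1) - ((d : ℝ) + 2)) *
        ((2 : ℝ) ^ (d + 1) / (n : ℝ) * (∑ i, G i * ∏ j, R j i) - 1)) :
    ∀ π : Equiv.Perm (Fin n), ρ (v ∘ π) ≤ ρ Rag :=
  stmt_7_general n d R P hP v τ Rag hRag hmono ρ hρ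
end

section
/- Let n ≥ 1 and d ≥ 1 be integers, let R_1, …, R_d : Fin n → ℝ be rankings, and set P(i) = ∏_{j=1}^d R_j(i). Let v : Fin n → ℝ be a fixed list of rank values and suppose R = v ∘ τ for some permutation τ of Fin n such that R and P antivary (i.e., P(i) < P(k) implies R(k) ≤ R(i)). Then for every permutation π of Fin n, ρ_n(v ∘ π; R_1,…,R_d) ≥ ρ_n(R; R_1,…,R_d), where ρ_n(G; R_1,…,R_d) = h(d+1)·[(2^{d+1}/n)·∑_{i} G(i)·∏_{j=1}^d R_j(i) − 1] and h(d+1) = (d+2)/(2^{d+1} − (d+2)) > 0; that is, the ranking ordered oppositely to the product of the R_j minimises multivariate Spearman's ρ among all rankings with the given value set. -/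
/-! Multivariate Spearman's ρ is a nondecreasing affine function of `∑ i, G i * P i`, and by the
rearrangement inequality this sum is smallest, among all rearrangements `v ∘ π` of the rank
values, for the one that antivaries with the product `P` of the rankings. -/

open Equiv

theorem Antivary.sum_comp_mul_le_sum_comp_perm_mul
    {ι α : Type*} [Fintype ι] [CommRing α] [LinearOrder α] [IsStrictOrderedRing α]
    {v g : ι → α} {τ : Perm ι} (h : Antivary (v ∘ τ) g) (π : Perm ι) :
    ∑ i, v (τ i) * g i ≤ ∑ i, v (π i) * g i := by
  simpa using h.sum_mul_le_sum_comp_perm_mul (σ := π.trans τ.symm)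

/-- For `d = 0` the denominator vanishes, and the normalisation is the junk value `0`. -/
theorem spearman_normalisation_nonneg (d : ℕ) :
    0 ≤ ((d : ℝ) + 2) / ((2 : ℝ) ^ (d + 1) - ((d : ℝ) + 2)) := by
  have hpow : ((d + 2 : ℕ) : ℝ) ≤ ((2 ^ (d + 1) : ℕ) : ℝ) :=
    Nat.cast_le.mpr (d + 1).lt_two_pow_self
  push_cast at hpow
  exact div_nonneg (by positivity) (sub_nonneg.mpr hpow)

theorem stmt_8_general (n d : ℕ)
    (R : Fin d → Fin n → ℝ) (P : Fin n → ℝ) (hP : P = fun i => ∏ j, R j i)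
    (v : Fin n → ℝ) (τ : Equiv.Perm (Fin n))
    (Rag : Fin n → ℝ) (hRag : Rag = v ∘ τ)
    (hanti : ∀ i k, P i < P k → Rag k ≤ Rag i)
    (ρ : (Fin n → ℝ) → ℝ)
    (hρ : ρ = fun G => ((d : ℝ) + 2) / ((2 : ℝ) ^ (d + 1) - ((d : ℝ) + 2)) *
        ((2 : ℝ) ^ (d + 1) / (n : ℝ) * (∑ i, G i * ∏ j, R j i) - 1)) :
    ∀ π : Equiv.Perm (Fin n), ρ Rag ≤ ρ (v ∘ π) := by
  intro π
  subst hP hRag hρ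
  have hsum : ∑ i, v (τ i) * ∏ j, R j i ≤ ∑ i, v (π i) * ∏ j, R j i :=
    Antivary.sum_comp_mul_le_sum_comp_perm_mul (fun i k h => hanti i k h) π
  have hh := spearman_normalisation_nonneg d
  dsimp only [Function.comp_apply]
  gcongr

/-- The ranking ordered oppositely to the product of the expert rankings minimises the
empirical multivariate Spearman correlation
`ρ_n(G) = h(d+1)·[(2^{d+1}/n)·∑_i G(i)·∏_j R_j(i) − 1]` among all rankings with the
given value set `v`. -/
theorem stmt_8 (n d : ℕ) (hn : 1 ≤ n) (hd : 1 ≤ d)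
    (R : Fin d → Fin n → ℝ) (P : Fin n → ℝ) (hP : P = fun i => ∏ j, R j i)
    (v : Fin n → ℝ) (τ : Equiv.Perm (Fin n))
    (Rag : Fin n → ℝ) (hRag : Rag = v ∘ τ)
    (hanti : ∀ i k, P i < P k → Rag k ≤ Rag i)
    (ρ : (Fin n → ℝ) → ℝ)
    (hρ : ρ = fun G => ((d : ℝ) + 2) / ((2 : ℝ) ^ (d + 1) - ((d : ℝ) + 2)) *
        ((2 : ℝ) ^ (d + 1) / (n : ℝ) * (∑ i, G i * ∏ j, R j i) - 1)) :
    ∀ π : Equiv.Perm (Fin n), ρ Rag ≤ ρ (v ∘ π) :=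
  stmt_8_general n d R P hP v τ Rag hRag hanti ρ hρ
end

section
/- Let Ω ⊆ Ω' be finite sets with r = |Ω| ≥ 1 and r' = |Ω'| ≥ 1, let R : Ω → ℝ, and let m = (1/r)·∑_{x∈Ω} R(x) be the mean of R. Define R' : Ω' → ℝ by R'(x) = (r/r')·R(x) for x ∈ Ω and R'(x) = (r + r')/(2r') for x ∈ Ω' \ Ω. Then the mean of R' satisfies (1/r')·∑_{x∈Ω'} R'(x) = (r²(2m − 1) + r'²)/(2r'²). In particular, if m = 1/2 then the mean of R' is also 1/2, so the non-informative extension is strictly consistent (mean-preserving) when the mean rank is 1/2. -/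
open Finset

theorem Finset.sum_eq_card_mul_of_eq_mean {ι K : Type*} [Semifield K] [CharZero K] (s : Finset ι) (f : ι → K)
    {m : K} (hm : m = 1 / (#s : K) * ∑ x ∈ s, f x) :
    ∑ x ∈ s, f x = #s * m := by
  rw [hm, one_div_mul_eq_div, ← expect_eq_sum_div_card, card_mul_expect]

theorem Finset.sum_eq_mul_sum_add_card_sdiff_mul {α M : Type*} [DecidableEq α] [Ring M]
    {s t : Finset α} (hst : s ⊆ t) {f g : α → M} {c d : M}
    (hs : ∀ x ∈ s, g x = c * f x) (hts : ∀ x ∈ t, x ∉ s → g x = d) :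
    ∑ x ∈ t, g x = c * ∑ x ∈ s, f x + (#t - #s) * d := by
  have hsdiff : ∑ x ∈ t \ s, g x = ∑ x ∈ t \ s, d :=
    sum_congr rfl fun x hx ↦ hts x (mem_sdiff.1 hx).1 (mem_sdiff.1 hx).2
  rw [← sum_sdiff hst, hsdiff, sum_congr rfl hs, ← mul_sum, sum_const, nsmul_eq_mul,
    card_sdiff_of_subset hst, Nat.cast_sub (card_le_card hst), add_comm]

theorem stmt_10_general {α : Type*} (Ω Ω' : Finset α) (hsub : Ω ⊆ Ω')
    (hr' : 1 ≤ Ω'.card)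
    (R : α → ℝ) (m : ℝ) (hm : m = 1 / (Ω.card : ℝ) * ∑ x ∈ Ω, R x)
    (R' : α → ℝ)
    (hmem : ∀ x ∈ Ω, R' x = (Ω.card : ℝ) / (Ω'.card : ℝ) * R x)
    (hnot : ∀ x ∈ Ω', x ∉ Ω → R' x = ((Ω.card : ℝ) + (Ω'.card : ℝ)) / (2 * (Ω'.card : ℝ))) :
    1 / (Ω'.card : ℝ) * ∑ x ∈ Ω', R' x
      = ((Ω.card : ℝ) ^ 2 * (2 * m - 1) + (Ω'.card : ℝ) ^ 2) / (2 * (Ω'.card : ℝ) ^ 2)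
    ∧ (m = 1 / 2 → 1 / (Ω'.card : ℝ) * ∑ x ∈ Ω', R' x = 1 / 2) := by
  classical
  have hr'0 : (#Ω' : ℝ) ≠ 0 := by positivity
  have hsum := sum_eq_mul_sum_add_card_sdiff_mul hsub hmem hnot
  rw [sum_eq_card_mul_of_eq_mean Ω R hm] at hsum
  have hmean : 1 / (#Ω' : ℝ) * ∑ x ∈ Ω', R' x
      = ((#Ω : ℝ) ^ 2 * (2 * m - 1) + (#Ω' : ℝ) ^ 2) / (2 * (#Ω' : ℝ) ^ 2) := by
    rw [hsum]
    field_simp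
    ring
  refine ⟨hmean, fun hm_half ↦ ?_⟩
  rw [hmean, hm_half]
  field_simp
  ring

/-- The mean of the non-informative extension `R'` of `R` from `Ω` to `Ω'` equals
`(r²(2m − 1) + r'²)/(2r'²)` where `m` is the mean of `R`; in particular if `m = 1/2`
then the mean of `R'` is also `1/2` (the extension is strictly consistent). -/
theorem stmt_10 {α : Type*} (Ω Ω' : Finset α) (hsub : Ω ⊆ Ω')
    (hr : 1 ≤ Ω.card) (hr' : 1 ≤ Ω'.card)
    (R : α → ℝ) (m : ℝ) (hm : m = 1 / (Ω.card : ℝ) * ∑ x ∈ Ω, R x)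
    (R' : α → ℝ)
    (hmem : ∀ x ∈ Ω, R' x = (Ω.card : ℝ) / (Ω'.card : ℝ) * R x)
    (hnot : ∀ x ∈ Ω', x ∉ Ω → R' x = ((Ω.card : ℝ) + (Ω'.card : ℝ)) / (2 * (Ω'.card : ℝ))) :
    1 / (Ω'.card : ℝ) * ∑ x ∈ Ω', R' x
      = ((Ω.card : ℝ) ^ 2 * (2 * m - 1) + (Ω'.card : ℝ) ^ 2) / (2 * (Ω'.card : ℝ) ^ 2)
    ∧ (m = 1 / 2 → 1 / (Ω'.card : ℝ) * ∑ x ∈ Ω', R' x = 1 / 2) :=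
  stmt_10_general Ω Ω' hsub hr' R m hm R' hmem hnot
end
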